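/- Let k ≥ 2. Every vector field f with components in 𝒫^{k-2}(ℝ³) can be written as f = curl v₁ + ∇v₂ for some vector field v₁ with components in 𝒫^{k-1}(ℝ³) and some scalar v₂ ∈ 𝒫^{k-1}(ℝ³); that is, [𝒫^{k-2}(ℝ³)]³ = curl[𝒫^{k-1}(ℝ³)]³ + ∇𝒫^{k-1}(ℝ³). -/

import Mathlib

open MvPolynomial

/-- The formal Laplacian `Δp = ∑ⱼ ∂ⱼ∂ⱼp` of a polynomial in `d` variables. -/
noncomputable def lap {d : ℕ} (p : MvPolynomial (Fin d) ℝ) : MvPolynomial (Fin d) ℝ :=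
  ∑ j, pderiv j (pderiv j p)

/-- The formal divergence `div v = ∑ᵢ ∂ᵢvᵢ` of a polynomial vector field. -/
noncomputable def pdiv {d : ℕ} (v : Fin d → MvPolynomial (Fin d) ℝ) : MvPolynomial (Fin d) ℝ :=
  ∑ i, pderiv i (v i)

/-- The formal curl of a polynomial vector field on `ℝ³`:
`curl v = (∂₂v₃ − ∂₃v₂, ∂₃v₁ − ∂₁v₃, ∂₁v₂ − ∂₂v₁)` (0-based indices). -/
noncomputable def curl3 (v : Fin 3 → MvPolynomial (Fin 3) ℝ) : Fin 3 → MvPolynomial (Fin 3) ℝ :=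
  ![pderiv 1 (v 2) - pderiv 2 (v 1),
    pderiv 2 (v 0) - pderiv 0 (v 2),
    pderiv 0 (v 1) - pderiv 1 (v 0)]

/-!
Solve `Δφ = div f` with `deg φ ≤ deg f + 1`; then `f - ∇φ` is divergence free, hence the curl of
an explicit potential built from the formal antiderivatives `Aᵢ`, which satisfy `∂ᵢAᵢ = id` and
`∂ⱼAᵢ = Aᵢ∂ⱼ` for `j ≠ i`. The Laplacian is onto because `Δ(A₀²q) = q + A₀²Δ'q`, where
`Δ' = Δ - ∂₀²` commutes with `A₀` and lowers the degree by two, so the error term dies after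
finitely many corrections.
-/
namespace MvPolynomial

section Degree

variable {σ R : Type*} [CommSemiring R]

theorem totalDegree_pderiv_le (i : σ) (p : MvPolynomial σ R) :
    (pderiv i p).totalDegree ≤ p.totalDegree - 1 := by
  classical
  refine Finset.sup_le fun m hm => ?_
  have hm' : m + Finsupp.single i 1 ∈ p.support := by
    rw [mem_support_iff, coeff_pderiv] at hm
    exact mem_support_iff.mpr (left_ne_zero_of_mul hm)
  have := le_totalDegree hm'
  rw [Finsupp.sum_add_index' (fun _ => rfl) (fun _ _ _ => rfl),
    Finsupp.sum_single_index rfl] at this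
  omega

theorem pderiv_eq_zero_of_totalDegree_eq_zero {i : σ} {p : MvPolynomial σ R}
    (h : p.totalDegree = 0) : pderiv i p = 0 := by
  rw [totalDegree_eq_zero_iff_eq_C.mp h, pderiv_C]

end Degree

section Antideriv

variable {σ K : Type*} [Field K]

noncomputable def antideriv (i : σ) : MvPolynomial σ K →ₗ[K] MvPolynomial σ K :=
  (basisMonomials σ K).constr K fun s => monomial (s + Finsupp.single i 1) (s i + 1 : K)⁻¹

theorem antideriv_monomial (i : σ) (s : σ →₀ ℕ) (c : K) :
    antideriv i (monomial s c) = monomial (s + Finsupp.single i 1) (c / (s i + 1)) := by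
  have hs : monomial s c = c • basisMonomials σ K s := by
    rw [coe_basisMonomials, smul_monomial, smul_eq_mul, mul_one]
  rw [hs, map_smul, antideriv, Module.Basis.constr_basis, smul_monomial, smul_eq_mul,
    div_eq_mul_inv]

theorem pderiv_antideriv [CharZero K] (i : σ) (p : MvPolynomial σ K) :
    pderiv i (antideriv i p) = p := by
  induction p using induction_on' with
  | monomial s c =>
    rw [antideriv_monomial, pderiv_monomial, add_tsub_cancel_right]
    congr 1
    simp only [Finsupp.add_apply, Finsupp.single_eq_same, Nat.cast_add, Nat.cast_one]
    field_simp
  | add p q hp hq => rw [map_add, map_add, hp, hq]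

theorem pderiv_antideriv_of_ne {i j : σ} (h : j ≠ i) (p : MvPolynomial σ K) :
    pderiv j (antideriv i p) = antideriv i (pderiv j p) := by
  induction p using induction_on' with
  | monomial s c =>
    rw [antideriv_monomial, pderiv_monomial, pderiv_monomial, antideriv_monomial]
    have hexp : s + Finsupp.single i 1 - Finsupp.single j 1
        = s - Finsupp.single j 1 + Finsupp.single i 1 := by
      classical
      ext x
      simp only [Finsupp.add_apply, Finsupp.tsub_apply, Finsupp.single_apply]
      split_ifs <;> grind
    simp only [hexp, Finsupp.add_apply, Finsupp.tsub_apply, Finsupp.single_eq_of_ne h,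
      Finsupp.single_eq_of_ne h.symm, add_zero, tsub_zero]
    congr 1
    ring
  | add p q hp hq => simp only [map_add, hp, hq]

theorem totalDegree_antideriv_le (i : σ) (p : MvPolynomial σ K) :
    (antideriv i p).totalDegree ≤ p.totalDegree + 1 := by
  conv_lhs => rw [p.as_sum, map_sum]
  refine totalDegree_finsetSum_le fun s hs => ?_
  rw [antideriv_monomial]
  refine (totalDegree_monomial_le _ _).trans ?_
  rw [Finsupp.sum_add_index' (fun _ => rfl) (fun _ _ _ => rfl), Finsupp.sum_single_index rfl]
  exact Nat.add_le_add_right (le_totalDegree hs) 1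

theorem totalDegree_antideriv_pderiv_le (i j : σ) (p : MvPolynomial σ K) :
    (antideriv i (pderiv j p)).totalDegree ≤ p.totalDegree := by
  by_cases hp : p.totalDegree = 0
  · simp [pderiv_eq_zero_of_totalDegree_eq_zero hp, hp]
  · have h1 := totalDegree_antideriv_le i (pderiv j p)
    have h2 := totalDegree_pderiv_le j p
    omega

end Antideriv

end MvPolynomial

section Laplacian

variable {d : ℕ}

noncomputable def lapExcept (i : Fin d) (p : MvPolynomial (Fin d) ℝ) : MvPolynomial (Fin d) ℝ :=
  ∑ j ∈ Finset.univ.erase i, pderiv j (pderiv j p)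

theorem lap_eq_pderiv_pderiv_add_lapExcept (i : Fin d) (p : MvPolynomial (Fin d) ℝ) :
    lap p = pderiv i (pderiv i p) + lapExcept i p :=
  (Finset.add_sum_erase _ _ (Finset.mem_univ i)).symm

theorem lap_sub (p q : MvPolynomial (Fin d) ℝ) : lap (p - q) = lap p - lap q := by
  simp only [lap, map_sub, Finset.sum_sub_distrib]

theorem lapExcept_antideriv (i : Fin d) (p : MvPolynomial (Fin d) ℝ) :
    lapExcept i (antideriv i p) = antideriv i (lapExcept i p) := by
  simp only [lapExcept, map_sum]
  refine Finset.sum_congr rfl fun j hj => ?_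
  rw [pderiv_antideriv_of_ne (Finset.ne_of_mem_erase hj),
    pderiv_antideriv_of_ne (Finset.ne_of_mem_erase hj)]

theorem lap_antideriv_antideriv (i : Fin d) (q : MvPolynomial (Fin d) ℝ) :
    lap (antideriv i (antideriv i q)) = q + antideriv i (antideriv i (lapExcept i q)) := by
  rw [lap_eq_pderiv_pderiv_add_lapExcept i, pderiv_antideriv, pderiv_antideriv,
    lapExcept_antideriv, lapExcept_antideriv]

theorem totalDegree_lapExcept_add_two_le_or_eq_zero (i : Fin d) (p : MvPolynomial (Fin d) ℝ) :
    (lapExcept i p).totalDegree + 2 ≤ p.totalDegree ∨ lapExcept i p = 0 := by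
  have hderiv (j : Fin d) : (pderiv j (pderiv j p)).totalDegree ≤ p.totalDegree - 2 :=
    (totalDegree_pderiv_le j _).trans (by have := totalDegree_pderiv_le j p; omega)
  by_cases hp : p.totalDegree ≤ 1
  · refine Or.inr (Finset.sum_eq_zero fun j _ => pderiv_eq_zero_of_totalDegree_eq_zero ?_)
    have := totalDegree_pderiv_le j p
    omega
  · have := totalDegree_finsetSum_le (s := Finset.univ.erase i) fun j _ => hderiv j
    exact Or.inl (by rw [lapExcept]; omega)

theorem exists_iterate_lapExcept_eq_zero (i : Fin d) (p : MvPolynomial (Fin d) ℝ) :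
    ∃ N, (lapExcept i)^[N] p = 0 := by
  induction h : p.totalDegree using Nat.strong_induction_on generalizing p with
  | _ n ih =>
    rcases totalDegree_lapExcept_add_two_le_or_eq_zero i p with hlt | hzero
    · obtain ⟨N, hN⟩ := ih _ (by omega) (lapExcept i p) rfl
      exact ⟨N + 1, by rwa [Function.iterate_succ_apply]⟩
    · exact ⟨1, hzero⟩

theorem totalDegree_antideriv_antideriv_lapExcept_le (i : Fin d) (q : MvPolynomial (Fin d) ℝ) :
    (antideriv i (antideriv i (lapExcept i q))).totalDegree ≤ q.totalDegree := by
  rcases totalDegree_lapExcept_add_two_le_or_eq_zero i q with hlt | hzero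
  · have h1 := totalDegree_antideriv_le i (lapExcept i q)
    have h2 := totalDegree_antideriv_le i (antideriv i (lapExcept i q))
    omega
  · simp [hzero]

theorem exists_lap_eq_of_iterate_lapExcept_eq_zero (i : Fin d) (N : ℕ) :
    ∀ q : MvPolynomial (Fin d) ℝ, (lapExcept i)^[N] q = 0 →
      ∃ φ, lap φ = q ∧ φ.totalDegree ≤ q.totalDegree + 2 := by
  induction N with
  | zero => rintro q rfl; exact ⟨0, by simp [lap], by simp⟩
  | succ N ih =>
    intro q hq
    have hcomm : Function.Commute (lapExcept i) (antideriv i) := lapExcept_antideriv i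
    obtain ⟨ψ, hψ, hψdeg⟩ := ih (antideriv i (antideriv i (lapExcept i q))) (by
      rw [hcomm.iterate_left, hcomm.iterate_left, ← Function.iterate_succ_apply, hq,
        map_zero, map_zero])
    refine ⟨antideriv i (antideriv i q) - ψ, ?_, ?_⟩
    · rw [lap_sub, lap_antideriv_antideriv, hψ, add_sub_cancel_right]
    · have h1 := totalDegree_antideriv_le i q
      have h2 := totalDegree_antideriv_le i (antideriv i q)
      have h3 := totalDegree_antideriv_antideriv_lapExcept_le i q
      exact (totalDegree_sub _ _).trans (max_le (by omega) (by omega))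

theorem exists_lap_eq [NeZero d] (q : MvPolynomial (Fin d) ℝ) :
    ∃ φ, lap φ = q ∧ φ.totalDegree ≤ q.totalDegree + 2 :=
  have ⟨N, hN⟩ := exists_iterate_lapExcept_eq_zero 0 q
  exists_lap_eq_of_iterate_lapExcept_eq_zero 0 N q hN

theorem exists_lap_eq_pdiv [NeZero d] (f : Fin d → MvPolynomial (Fin d) ℝ) (n : ℕ)
    (hf : ∀ i, (f i).totalDegree ≤ n) : ∃ φ, lap φ = pdiv f ∧ φ.totalDegree ≤ n + 1 := by
  cases n with
  | zero =>
    refine ⟨0, ?_, by simp⟩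
    simp [lap, pdiv, pderiv_eq_zero_of_totalDegree_eq_zero (Nat.le_zero.mp (hf _))]
  | succ n =>
    obtain ⟨φ, hφ, hdeg⟩ := exists_lap_eq (pdiv f)
    have : (pdiv f).totalDegree ≤ n := totalDegree_finsetSum_le fun i _ =>
      (totalDegree_pderiv_le i (f i)).trans (by have := hf i; omega)
    exact ⟨φ, hφ, by omega⟩

theorem pdiv_sub_pderiv (f : Fin d → MvPolynomial (Fin d) ℝ) (φ : MvPolynomial (Fin d) ℝ) :
    pdiv (fun i => f i - pderiv i φ) = pdiv f - lap φ := by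
  simp only [pdiv, lap, map_sub, Finset.sum_sub_distrib]

end Laplacian

section Curl

-- `(0, A₀g₂, -A₀g₁)` already has the right second and third components; when `div g = 0` its
-- first one falls short by `g₀ - A₀∂₀g₀`, the restriction of `g₀` to `x₀ = 0`, which the `A₁`
-- term supplies without disturbing the others.
noncomputable def curlPotential (g : Fin 3 → MvPolynomial (Fin 3) ℝ) :
    Fin 3 → MvPolynomial (Fin 3) ℝ :=
  ![0, antideriv 0 (g 2), antideriv 1 (g 0 - antideriv 0 (pderiv 0 (g 0))) - antideriv 0 (g 1)]

theorem curl3_curlPotential {g : Fin 3 → MvPolynomial (Fin 3) ℝ} (hg : pdiv g = 0) :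
    curl3 (curlPotential g) = g := by
  have hdiv : antideriv 0 (pderiv 0 (g 0)) + antideriv 0 (pderiv 1 (g 1))
      + antideriv 0 (pderiv 2 (g 2)) = 0 := by
    rw [pdiv, Fin.sum_univ_three] at hg
    rw [← map_add, ← map_add, hg, map_zero]
  funext i
  fin_cases i
  · change pderiv 1 (antideriv 1 (g 0 - antideriv 0 (pderiv 0 (g 0))) - antideriv 0 (g 1))
      - pderiv 2 (antideriv 0 (g 2)) = g 0
    rw [map_sub, pderiv_antideriv, pderiv_antideriv_of_ne (show (1 : Fin 3) ≠ 0 by decide),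
      pderiv_antideriv_of_ne (show (2 : Fin 3) ≠ 0 by decide)]
    linear_combination -hdiv
  · change pderiv 2 0 - pderiv 0 (antideriv 1 (g 0 - antideriv 0 (pderiv 0 (g 0)))
      - antideriv 0 (g 1)) = g 1
    rw [map_sub, pderiv_antideriv, pderiv_antideriv_of_ne (show (0 : Fin 3) ≠ 1 by decide),
      map_sub, pderiv_antideriv, sub_self]
    simp
  · change pderiv 0 (antideriv 0 (g 2)) - pderiv 1 0 = g 2
    rw [pderiv_antideriv, map_zero, sub_zero]

theorem totalDegree_curlPotential_le {g : Fin 3 → MvPolynomial (Fin 3) ℝ} {n : ℕ}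
    (hg : ∀ i, (g i).totalDegree ≤ n) (i : Fin 3) : (curlPotential g i).totalDegree ≤ n + 1 := by
  have hA (j : Fin 3) {p : MvPolynomial (Fin 3) ℝ} (hp : p.totalDegree ≤ n) :
      (antideriv j p).totalDegree ≤ n + 1 :=
    (totalDegree_antideriv_le j p).trans (Nat.add_le_add_right hp 1)
  fin_cases i
  · simp [curlPotential]
  · exact hA 0 (hg 2)
  · refine (totalDegree_sub _ _).trans (max_le (hA 1 ?_) (hA 0 (hg 1)))
    exact (totalDegree_sub _ _).trans
      (max_le (hg 0) ((totalDegree_antideriv_pderiv_le 0 0 (g 0)).trans (hg 0)))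

end Curl

/-- For `k ≥ 2`, every vector field with components in `𝒫^{k-2}(ℝ³)` is the sum of a curl of a
vector field with components in `𝒫^{k-1}(ℝ³)` and a gradient of a scalar in `𝒫^{k-1}(ℝ³)`. -/
theorem curl_add_grad_decomposition (k : ℕ) (hk : 2 ≤ k)
    (f : Fin 3 → MvPolynomial (Fin 3) ℝ) (hf : ∀ i, (f i).totalDegree ≤ k - 2) :
    ∃ (v₁ : Fin 3 → MvPolynomial (Fin 3) ℝ) (v₂ : MvPolynomial (Fin 3) ℝ),
      (∀ i, (v₁ i).totalDegree ≤ k - 1) ∧ v₂.totalDegree ≤ k - 1 ∧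
      ∀ i, f i = curl3 v₁ i + pderiv i v₂ := by
  obtain ⟨φ, hφ, hφdeg⟩ := exists_lap_eq_pdiv f (k - 2) hf
  set g : Fin 3 → MvPolynomial (Fin 3) ℝ := fun i => f i - pderiv i φ
  have hg : pdiv g = 0 := by rw [pdiv_sub_pderiv, hφ, sub_self]
  have hgdeg (i : Fin 3) : (g i).totalDegree ≤ k - 2 :=
    (totalDegree_sub _ _).trans (max_le (hf i) ((totalDegree_pderiv_le i φ).trans (by omega)))
  refine ⟨curlPotential g, φ, fun i => (totalDegree_curlPotential_le hgdeg i).trans (by omega),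
    by omega, fun i => ?_⟩
  rw [curl3_curlPotential hg, sub_add_cancel]
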